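/- arXiv:1510.03465 — 3 statements merged into one kernel-verified Lean document; each statement's English description precedes it below -/
import Mathlib

section
/- (Wintner's theorem) Let f, g : ℕ → ℂ be arithmetic functions related by f(n) = ∑_{d | n} g(d) for every n ≥ 1. If the series ∑_{n ≥ 1} g(n)/n converges absolutely, with sum c, then ∑_{n ≤ x} f(n) = c·x + o(x) as x → ∞; in particular the mean value M(f) exists and equals c = ∑_{n ≥ 1} g(n)/n. -/
/-!
Exchanging the order of summation gives `∑_{n ≤ x} f(n) = ∑_{d ≤ x} ⌊x/d⌋ g(d)`, so the mean
`(1/x) ∑_{n ≤ x} f(n)` is the series `∑_d (⌊x/d⌋/x) g(d)`. Each weight `⌊x/d⌋/x` tends to `1/d` and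
is bounded by `1/d`, so dominated convergence, with the summable majorant `|g(d)|/d`, gives the
limit `∑_d g(d)/d`.
-/

open Filter Finset Topology

theorem sum_Icc_sum_divisors {M : Type*} [AddCommMonoid M] (g : ℕ → M) (N : ℕ) :
    ∑ n ∈ Icc 1 N, ∑ d ∈ n.divisors, g d = ∑ d ∈ Icc 1 N, (N / d) • g d := by
  rw [sum_comm' (t' := Icc 1 N) (s' := fun d => {n ∈ Ioc 0 N | d ∣ n})]
  · simp_rw [sum_const, Nat.Ioc_filter_dvd_card_eq_div]
  · intro n d
    simp only [mem_Icc, Nat.mem_divisors, mem_filter, mem_Ioc]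
    constructor
    · rintro ⟨⟨hn, hnN⟩, hdn, -⟩
      exact ⟨⟨⟨hn, hnN⟩, hdn⟩, Nat.pos_of_dvd_of_pos hdn hn, (Nat.le_of_dvd hn hdn).trans hnN⟩
    · rintro ⟨⟨⟨hn, hnN⟩, hdn⟩, -⟩
      exact ⟨⟨hn, hnN⟩, hdn, hn.ne'⟩

theorem tendsto_floor_div_natCast_div (d : ℕ) :
    Tendsto (fun x : ℝ => (⌊x / d⌋₊ : ℝ) / x) atTop (𝓝 (d : ℝ)⁻¹) := by
  rcases Nat.eq_zero_or_pos d with rfl | hd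
  · simp
  have hd' : (0 : ℝ) < d := Nat.cast_pos.2 hd
  have := (tendsto_nat_floor_div_atTop.comp (tendsto_id.atTop_div_const hd')).mul_const (d : ℝ)⁻¹
  rw [one_mul] at this
  refine this.congr' (eventually_ne_atTop 0 |>.mono fun x hx => ?_)
  simp only [Function.comp_apply, id]
  field_simp

theorem floor_div_natCast_div_le {x : ℝ} (hx : 0 ≤ x) (d : ℕ) :
    (⌊x / d⌋₊ : ℝ) / x ≤ (d : ℝ)⁻¹ := by
  rcases hx.eq_or_lt with rfl | hx
  · simp
  rw [div_le_iff₀ hx, ← div_eq_inv_mul]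
  exact Nat.floor_le (by positivity)

section

variable {𝕜 : Type*} [RCLike 𝕜]

theorem sum_Icc_floor_sum_divisors_div_eq_tsum (g : ℕ → 𝕜) (x : ℝ) :
    (∑ n ∈ Icc 1 ⌊x⌋₊, ∑ d ∈ n.divisors, g d) / x = ∑' d : ℕ, ((⌊x / d⌋₊ : ℝ) / x) • g d := by
  have hsupp : ∀ d ∉ Icc 1 ⌊x⌋₊, ((⌊x / d⌋₊ : ℝ) / x) • g d = 0 := by
    intro d hd
    rw [mem_Icc, not_and_or, not_le, not_le, Nat.lt_one_iff] at hd
    rcases hd with rfl | hd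
    · simp
    · simp [Nat.floor_div_natCast, Nat.div_eq_of_lt hd]
  rw [tsum_eq_sum hsupp, sum_Icc_sum_divisors, sum_div]
  refine sum_congr rfl fun d _ => ?_
  rw [Nat.floor_div_natCast, nsmul_eq_mul, RCLike.real_smul_eq_coe_mul]
  push_cast
  ring

theorem tendsto_sum_Icc_floor_sum_divisors_div (g : ℕ → 𝕜) (hg : Summable fun n => ‖g n / n‖) :
    Tendsto (fun x : ℝ => (∑ n ∈ Icc 1 ⌊x⌋₊, ∑ d ∈ n.divisors, g d) / x) atTop
      (𝓝 (∑' n, g n / n)) := by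
  simp_rw [sum_Icc_floor_sum_divisors_div_eq_tsum]
  refine tendsto_tsum_of_dominated_convergence hg (fun d => ?_) ?_
  · convert (tendsto_floor_div_natCast_div d).smul_const (g d) using 2
    rw [RCLike.real_smul_eq_coe_mul, div_eq_inv_mul, RCLike.ofReal_inv, RCLike.ofReal_natCast]
  · filter_upwards [eventually_ge_atTop 0] with x hx d
    rw [norm_smul, Real.norm_of_nonneg (by positivity), norm_div, RCLike.norm_natCast,
      div_eq_inv_mul ‖g d‖]
    exact mul_le_mul_of_nonneg_right (floor_div_natCast_div_le hx d) (norm_nonneg (g d))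

end

/-- **Wintner's theorem** (Theorem 7(i)): if f(n) = ∑_{d ∣ n} g(d) and
∑_{n ≥ 1} g(n)/n converges absolutely with sum c, then
∑_{n ≤ x} f(n) = c·x + o(x); in particular M(f) = c. -/
theorem wintner (f g : ℕ → ℂ)
    (hf : ∀ n : ℕ, 1 ≤ n → f n = ∑ d ∈ n.divisors, g d)
    (hg : Summable (fun n : ℕ => ‖g n / n‖)) :
    Tendsto (fun x : ℝ => (∑ n ∈ Finset.Icc 1 ⌊x⌋₊, f n) / x) atTop
      (nhds (∑' n : ℕ, g n / n)) := by
  refine (tendsto_sum_Icc_floor_sum_divisors_div g hg).congr fun x => ?_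
  rw [sum_congr rfl fun n hn => hf n (mem_Icc.1 hn).1]
  rfl
end

section
/- Let f, g : ℕ → ℂ be arithmetic functions related by f(n) = ∑_{d | n} g(d) for every n ≥ 1. If ∑_{n ≥ 1} |g(n)|/n converges and moreover ∑_{n ≥ 1} |g(n)| n^{−σ} converges for every real σ > 1/2, then for every ε > 0 one has ∑_{n ≤ x} f(n) = c·x + O(x^{1/2+ε}) as x → ∞, where c = ∑_{n ≥ 1} g(n)/n. -/
open Filter Finset Asymptotics

/-! Summing the divisor relation gives `∑_{n ≤ x} f n = ∑_d g d ⌊x/d⌋` and `c x = ∑_d g d (x/d)`,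
so the error term is `∑_d g d (⌊x/d⌋ - x/d)`. Since `|⌊t⌋ - t| ≤ min 1 t ≤ t ^ σ` for `0 ≤ σ ≤ 1`,
it is at most `x ^ σ ∑_d |g d| d ^ (-σ)`; take `σ = min (1/2 + ε) 1`. -/

lemma abs_natFloor_sub_le_rpow {t σ : ℝ} (ht : 0 ≤ t) (hσ0 : 0 ≤ σ) (hσ1 : σ ≤ 1) :
    |(⌊t⌋₊ : ℝ) - t| ≤ t ^ σ := by
  rcases lt_or_ge t 1 with ht1 | ht1
  · rw [Nat.floor_eq_zero.2 ht1, Nat.cast_zero, zero_sub, abs_neg, abs_of_nonneg ht]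
    simpa using Real.rpow_le_rpow_of_exponent_ge' ht ht1.le hσ0 hσ1
  · calc |(⌊t⌋₊ : ℝ) - t| ≤ 1 := by
          rw [abs_sub_comm, abs_of_nonneg (by linarith [Nat.floor_le ht])]
          linarith [Nat.lt_floor_add_one t]
      _ ≤ t ^ σ := Real.one_le_rpow ht1 hσ0

lemma sum_Icc_sum_divisors_eq_sum_mul_div {R : Type*} [Semiring R] (g : ℕ → R) (N : ℕ) :
    ∑ n ∈ Icc 1 N, ∑ d ∈ n.divisors, g d = ∑ d ∈ Icc 1 N, g d * (N / d : ℕ) := by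
  have hg : ∀ {d : ℕ}, d ≠ 0 → toArithmeticFunction g d = g d := fun hd => if_neg hd
  calc ∑ n ∈ Icc 1 N, ∑ d ∈ n.divisors, g d
      = ∑ n ∈ Ioc 0 N, (toArithmeticFunction g * ArithmeticFunction.zeta) n :=
        sum_congr rfl fun n _ => by
          rw [ArithmeticFunction.coe_mul_zeta_apply]
          exact sum_congr rfl fun d hd => (hg (Nat.ne_of_gt (Nat.pos_of_mem_divisors hd))).symm
    _ = ∑ d ∈ Icc 1 N, g d * (N / d : ℕ) := by
        rw [ArithmeticFunction.sum_Ioc_mul_zeta_eq_sum]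
        exact sum_congr rfl fun d hd => by rw [hg (by simp at hd; omega)]

lemma hasSum_mul_floor_div (g : ℕ → ℂ) (x : ℝ) :
    HasSum (fun d : ℕ => g d * ⌊x / d⌋₊) (∑ n ∈ Icc 1 ⌊x⌋₊, ∑ d ∈ n.divisors, g d) := by
  simp_rw [sum_Icc_sum_divisors_eq_sum_mul_div, Nat.floor_div_natCast]
  refine hasSum_sum_of_ne_finset_zero fun d hd => ?_
  rw [mem_Icc, not_and_or, not_le, not_le, Nat.lt_one_iff] at hd
  rcases hd with rfl | hd
  · simp
  · simp [Nat.div_eq_of_lt hd]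

lemma summable_div_natCast_of_summable_norm_div_rpow {g : ℕ → ℂ} {σ : ℝ} (hσ1 : σ ≤ 1)
    (hs : Summable fun n : ℕ => ‖g n‖ / (n : ℝ) ^ σ) :
    Summable fun n : ℕ => g n / n := by
  refine Summable.of_norm_bounded hs fun n => ?_
  rw [norm_div, Complex.norm_natCast]
  rcases Nat.eq_zero_or_pos n with rfl | hn
  · simp only [Nat.cast_zero, div_zero]
    exact div_nonneg (norm_nonneg _) (Real.rpow_nonneg le_rfl σ)
  · have hn1 : (1 : ℝ) ≤ n := by exact_mod_cast hn
    have := Real.rpow_pos_of_pos (by positivity : (0 : ℝ) < n) σ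
    gcongr
    simpa using Real.rpow_le_rpow_of_exponent_le hn1 hσ1

lemma norm_sum_sum_divisors_sub_le {g : ℕ → ℂ} {σ x : ℝ} (hσ0 : 0 ≤ σ) (hσ1 : σ ≤ 1)
    (hs : Summable fun n : ℕ => ‖g n‖ / (n : ℝ) ^ σ) (hx : 0 ≤ x) :
    ‖∑ n ∈ Icc 1 ⌊x⌋₊, ∑ d ∈ n.divisors, g d - (∑' n : ℕ, g n / n) * x‖
      ≤ (∑' n : ℕ, ‖g n‖ / (n : ℝ) ^ σ) * x ^ σ := by
  have hcx : HasSum (fun d : ℕ => g d / d * x) ((∑' n : ℕ, g n / n) * x) :=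
    (summable_div_natCast_of_summable_norm_div_rpow hσ1 hs).hasSum.mul_right _
  refine ((hasSum_mul_floor_div g x).sub hcx).norm_le_of_bounded (hs.hasSum.mul_right _)
    fun d => ?_
  have hterm : g d * ⌊x / d⌋₊ - g d / d * x = g d * (((⌊x / d⌋₊ : ℝ) - x / d : ℝ) : ℂ) := by
    push_cast; ring
  rw [hterm, norm_mul, Complex.norm_real, Real.norm_eq_abs, div_mul_eq_mul_div, mul_div_assoc,
    ← Real.div_rpow hx d.cast_nonneg]
  gcongr
  exact abs_natFloor_sub_le_rpow (by positivity) hσ0 hσ1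

theorem wintner_half_plane_general (f g : ℕ → ℂ)
    (hf : ∀ n : ℕ, 1 ≤ n → f n = ∑ d ∈ n.divisors, g d)
    (hg' : ∀ σ : ℝ, 1 / 2 < σ → Summable (fun n : ℕ => ‖g n‖ / (n : ℝ) ^ σ)) :
    ∀ ε : ℝ, 0 < ε →
      (fun x : ℝ => (∑ n ∈ Finset.Icc 1 ⌊x⌋₊, f n) - (∑' n : ℕ, g n / n) * x)
        =O[atTop] (fun x : ℝ => x ^ (1 / 2 + ε)) := by
  intro ε hε
  set σ := min (1 / 2 + ε) 1
  have hσ0 : 0 ≤ σ := le_min (by positivity) zero_le_one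
  have hs := hg' σ (lt_min (by linarith) (by norm_num))
  refine IsBigO.of_bound (∑' n : ℕ, ‖g n‖ / (n : ℝ) ^ σ) ?_
  filter_upwards [eventually_ge_atTop 1] with x hx
  have hfx : ∑ n ∈ Icc 1 ⌊x⌋₊, f n = ∑ n ∈ Icc 1 ⌊x⌋₊, ∑ d ∈ n.divisors, g d :=
    sum_congr rfl fun n hn => hf n (mem_Icc.1 hn).1
  rw [hfx, Real.norm_of_nonneg (by positivity)]
  calc _ ≤ (∑' n : ℕ, ‖g n‖ / (n : ℝ) ^ σ) * x ^ σ :=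
        norm_sum_sum_divisors_sub_le hσ0 (min_le_right _ _) hs (by linarith)
    _ ≤ (∑' n : ℕ, ‖g n‖ / (n : ℝ) ^ σ) * x ^ (1 / 2 + ε) := by
        gcongr
        exact min_le_left _ _

/-- Theorem 7(ii): if f(n) = ∑_{d ∣ n} g(d), the series ∑ |g(n)|/n converges,
and ∑ |g(n)| n^{−σ} converges for every σ > 1/2, then for every ε > 0,
∑_{n ≤ x} f(n) = c·x + O(x^{1/2+ε}) with c = ∑_{n ≥ 1} g(n)/n. -/
theorem wintner_half_plane (f g : ℕ → ℂ)
    (hf : ∀ n : ℕ, 1 ≤ n → f n = ∑ d ∈ n.divisors, g d)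
    (hg : Summable (fun n : ℕ => ‖g n‖ / n))
    (hg' : ∀ σ : ℝ, 1 / 2 < σ → Summable (fun n : ℕ => ‖g n‖ / (n : ℝ) ^ σ)) :
    ∀ ε : ℝ, 0 < ε →
      (fun x : ℝ => (∑ n ∈ Finset.Icc 1 ⌊x⌋₊, f n) - (∑' n : ℕ, g n / n) * x)
        =O[atTop] (fun x : ℝ => x ^ (1 / 2 + ε)) :=
  wintner_half_plane_general f g hf hg'
end

section
/- Let f, g : ℕ → ℂ be arithmetic functions with f(n) = ∑_{d | n} g(d) for every n ≥ 1, and suppose ∑_{n ≥ 1} |g(n)|/n converges. Then for integers a, q ≥ 1 with a < q and gcd(a, q) = 1, the mean value of f along the arithmetic progression n ≡ a (mod q) exists and equals lim_{x→∞} (1/x) ∑_{n ≤ x, n ≡ a (mod q)} f(n) = (1/q) ∑_{d | q} (μ(d)/d) ∑_{n ≥ 1} g(d·n)/n. -/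
open Filter Finset ArithmeticFunction

/-!
Expanding `f = 1 * g` and swapping the sums, the progression sum up to `x` becomes
`∑_d g(d) · #{n ≤ x : n ≡ a (mod q), d ∣ n}`. Since `gcd(a, q) = 1`, this count vanishes unless
`d` is coprime to `q`, and then by the Chinese remainder theorem it counts one residue class
modulo `dq`, so it is `x / (dq) + O(1)`. It is always at most `x / d`, so dominated convergence
against `∑ |g(d)| / d` gives the limit `(1/q) ∑_{(d,q)=1} g(d) / d`. Finally, Möbius inversion over
the divisors of `q` detects the condition `(d, q) = 1` and yields the stated formula.
-/

lemma abs_card_Icc_filter_modEq_sub_le {m : ℕ} (hm : 0 < m) (v N : ℕ) :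
    |(#{n ∈ Icc 1 N | n ≡ v [MOD m]} : ℝ) - N / m| ≤ 1 := by
  have hcard := Nat.Ioc_filter_modEq_card 0 N hm v
  rw [Nat.cast_zero, zero_sub] at hcard
  rw [← zero_add 1, Icc_add_one_left_eq_Ioc]
  set k := ⌊((N : ℚ) - v) / m⌋ - ⌊-(v : ℚ) / m⌋
  have hk : |(k : ℚ) - N / m| < 1 := by
    have hsplit : ((N : ℚ) - v) / m - -(v : ℚ) / m = N / m := by ring
    rw [abs_lt]
    push_cast [k]
    constructor <;> linarith [Int.floor_le (((N : ℚ) - v) / m),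
      Int.lt_floor_add_one (((N : ℚ) - v) / m), Int.floor_le (-(v : ℚ) / m),
      Int.lt_floor_add_one (-(v : ℚ) / m)]
  have hq : |((#{n ∈ Ioc 0 N | n ≡ v [MOD m]} : ℤ) : ℚ) - N / m| ≤ 1 := by
    rw [hcard]
    rcases le_total k 0 with hk0 | hk0
    · have hkq : (k : ℚ) ≤ 0 := by exact_mod_cast hk0
      rw [max_eq_right hk0, Int.cast_zero, zero_sub, abs_neg, abs_of_nonneg (by positivity)]
      linarith [(abs_lt.mp hk).1]
    · rw [max_eq_left hk0]
      exact hk.le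
  have hr := (Rat.cast_le (K := ℝ)).mpr hq
  push_cast at hr
  exact hr

lemma tendsto_card_Icc_floor_filter_modEq_div {m : ℕ} (hm : 0 < m) (v : ℕ) :
    Tendsto (fun x : ℝ => (#{n ∈ Icc 1 ⌊x⌋₊ | n ≡ v [MOD m]} : ℝ) / x) atTop
      (nhds (1 / m)) := by
  rw [tendsto_iff_norm_sub_tendsto_zero]
  refine squeeze_zero' (Eventually.of_forall fun _ => norm_nonneg _) ?_
    (tendsto_const_nhds.div_atTop tendsto_id : Tendsto (fun x : ℝ => 2 / x) atTop (nhds 0))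
  filter_upwards [eventually_ge_atTop 1] with x hx
  have hx0 : 0 < x := by linarith
  have hm1 : (1 : ℝ) ≤ m := by exact_mod_cast hm
  have hfloor : |(⌊x⌋₊ : ℝ) - x| ≤ 1 := by
    rw [abs_le]
    constructor <;> linarith [Nat.floor_le hx0.le, Nat.lt_floor_add_one x]
  have hfloor' : |((⌊x⌋₊ : ℝ) - x) / m| ≤ 1 := by
    rw [abs_div, Nat.abs_cast, div_le_one (by positivity)]; linarith
  have hcount := abs_card_Icc_filter_modEq_sub_le hm v ⌊x⌋₊
  calc ‖(#{n ∈ Icc 1 ⌊x⌋₊ | n ≡ v [MOD m]} : ℝ) / x - 1 / m‖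
      = |((#{n ∈ Icc 1 ⌊x⌋₊ | n ≡ v [MOD m]} : ℝ) - ⌊x⌋₊ / m) + ((⌊x⌋₊ : ℝ) - x) / m| / x := by
        rw [Real.norm_eq_abs, ← abs_of_pos hx0, ← abs_div, abs_of_pos hx0]
        congr 1; field_simp; ring
    _ ≤ 2 / x := by
        gcongr
        linarith [abs_add_le ((#{n ∈ Icc 1 ⌊x⌋₊ | n ≡ v [MOD m]} : ℝ) - ⌊x⌋₊ / m)
          (((⌊x⌋₊ : ℝ) - x) / m)]

lemma exists_modEq_mul_iff_dvd_and_modEq {d q : ℕ} (h : d.Coprime q) (a : ℕ) :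
    ∃ c, ∀ n, d ∣ n ∧ n ≡ a [MOD q] ↔ n ≡ c [MOD d * q] := by
  obtain ⟨c, hc0, hca⟩ := Nat.chineseRemainder h 0 a
  refine ⟨c, fun n => ?_⟩
  rw [← Nat.modEq_and_modEq_iff_modEq_mul h, ← Nat.modEq_zero_iff_dvd]
  exact and_congr ⟨fun h => h.trans hc0.symm, fun h => h.trans hc0⟩
    ⟨fun h => h.trans hca.symm, fun h => h.trans hca⟩

lemma card_Icc_filter_and_dvd_le (P : ℕ → Prop) [DecidablePred P] (N d : ℕ) :
    #{n ∈ Icc 1 N | P n ∧ d ∣ n} ≤ N / d := by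
  rw [← Nat.Ioc_filter_dvd_card_eq_div, ← zero_add 1, Icc_add_one_left_eq_Ioc]
  exact card_le_card (monotone_filter_right _ fun _ _ h => h.2)

lemma card_Icc_filter_and_dvd_div_le (P : ℕ → Prop) [DecidablePred P] {x : ℝ} (hx : 0 < x)
    (d : ℕ) : (#{n ∈ Icc 1 ⌊x⌋₊ | P n ∧ d ∣ n} : ℝ) / x ≤ 1 / d := by
  rw [div_le_iff₀ hx, one_div_mul_eq_div]
  calc (#{n ∈ Icc 1 ⌊x⌋₊ | P n ∧ d ∣ n} : ℝ) ≤ (⌊x⌋₊ / d : ℕ) := by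
        exact_mod_cast card_Icc_filter_and_dvd_le P ⌊x⌋₊ d
    _ ≤ (⌊x⌋₊ : ℝ) / d := Nat.cast_div_le
    _ ≤ x / d := by gcongr; exact Nat.floor_le hx.le

lemma filter_mod_eq_and_dvd_eq_empty {a q d : ℕ} (hcop : a.Coprime q)
    (hd : ¬(d ≠ 0 ∧ d.Coprime q)) (N : ℕ) :
    {n ∈ Icc 1 N | n % q = a ∧ d ∣ n} = ∅ := by
  refine filter_false_of_mem fun n hn ⟨hna, hdn⟩ => hd ⟨?_, ?_⟩
  · rintro rfl
    rw [zero_dvd_iff] at hdn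
    simp [hdn] at hn
  · have hn : n.Coprime q := by
      rwa [Nat.Coprime, Nat.gcd_comm, Nat.gcd_rec, hna]
    exact hn.coprime_dvd_left hdn

lemma tendsto_card_filter_mod_eq_and_dvd_div {a q : ℕ} (haq : a < q) (hcop : a.Coprime q)
    (d : ℕ) :
    Tendsto (fun x : ℝ => (#{n ∈ Icc 1 ⌊x⌋₊ | n % q = a ∧ d ∣ n} : ℝ) / x) atTop
      (nhds (if d.Coprime q then 1 / (d * q) else 0)) := by
  by_cases hd : d ≠ 0 ∧ d.Coprime q
  · obtain ⟨c, hc⟩ := exists_modEq_mul_iff_dvd_and_modEq hd.2 a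
    have hfilter (N : ℕ) :
        {n ∈ Icc 1 N | n % q = a ∧ d ∣ n} = {n ∈ Icc 1 N | n ≡ c [MOD d * q]} :=
      filter_congr fun n _ => by rw [← hc, and_comm, Nat.ModEq, Nat.mod_eq_of_lt haq]
    simp_rw [hfilter, if_pos hd.2]
    exact_mod_cast tendsto_card_Icc_floor_filter_modEq_div
      (Nat.mul_pos (Nat.pos_of_ne_zero hd.1) (by omega)) c
  · simp_rw [filter_mod_eq_and_dvd_eq_empty hcop hd, card_empty, Nat.cast_zero, zero_div]
    -- for `d = 0` the limit `1 / (0 * q)` is the junk value `0` as well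
    convert tendsto_const_nhds using 2
    split_ifs <;> simp_all

lemma sum_filter_sum_divisors_eq_tsum_card_smul {M : Type*} [AddCommMonoid M]
    [TopologicalSpace M] (P : ℕ → Prop) [DecidablePred P] (g : ℕ → M) (N : ℕ) :
    ∑ n ∈ Icc 1 N with P n, ∑ d ∈ n.divisors, g d = ∑' d, #{n ∈ Icc 1 N | P n ∧ d ∣ n} • g d := by
  have hdvd {d n : ℕ} (hdn : d ∣ n) (hn : n ∈ Icc 1 N) : d ∈ Icc 1 N := by
    rw [mem_Icc] at hn ⊢
    exact ⟨Nat.pos_of_dvd_of_pos hdn hn.1, (Nat.le_of_dvd hn.1 hdn).trans hn.2⟩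
  rw [tsum_eq_sum (s := Icc 1 N) fun d hd => ?_]
  · simp_rw [← sum_const, ← filter_filter]
    refine sum_comm' fun n d => ?_
    simp only [mem_filter, Nat.mem_divisors]
    constructor
    · rintro ⟨⟨hn, hP⟩, hdn, -⟩
      exact ⟨⟨⟨hn, hP⟩, hdn⟩, hdvd hdn hn⟩
    · rintro ⟨⟨⟨hn, hP⟩, hdn⟩, -⟩
      exact ⟨⟨hn, hP⟩, hdn, (Nat.one_le_iff_ne_zero.mp (mem_Icc.mp hn).1)⟩
  · rw [card_eq_zero.mpr (filter_false_of_mem fun n hn h => hd (hdvd h.2 hn)), zero_smul]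

lemma Nat.tsum_comp_mul_left_eq_tsum_indicator {M : Type*} [AddCommMonoid M] [TopologicalSpace M]
    {e : ℕ} (he : e ≠ 0) (G : ℕ → M) :
    ∑' n, G (e * n) = ∑' m, {m | e ∣ m}.indicator G m := by
  refine (tsum_congr fun n =>
    (Set.indicator_of_mem (s := {m | e ∣ m}) (dvd_mul_right e n) G).symm).trans ?_
  refine (mul_right_injective₀ he).tsum_eq (Set.support_indicator_subset.trans ?_)
  rintro m ⟨k, rfl⟩
  exact ⟨k, rfl⟩

lemma sum_moebius_filter_dvd {R : Type*} [Ring R] {q : ℕ} (hq : q ≠ 0) (m : ℕ) :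
    ∑ e ∈ q.divisors with e ∣ m, (moebius e : R) = if m.Coprime q then 1 else 0 := by
  have hgcd : {e ∈ q.divisors | e ∣ m} = (m.gcd q).divisors := by
    ext e
    simp [Nat.dvd_gcd_iff, hq, Nat.gcd_eq_zero_iff, and_comm]
  rw [hgcd]
  simpa only [intCoe_apply, coe_zeta_mul_coe_moebius, one_apply] using
    (coe_zeta_mul_apply (f := (moebius : ArithmeticFunction R)) (x := m.gcd q)).symm

lemma tsum_ite_coprime_eq_sum_moebius_mul_tsum {R : Type*} [NormedRing R] [CompleteSpace R]
    {q : ℕ} (hq : q ≠ 0) {G : ℕ → R} (hG : Summable G) :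
    ∑' m, (if m.Coprime q then G m else 0) = ∑ e ∈ q.divisors, (moebius e : R) * ∑' n, G (e * n) := by
  have hsum : ∀ e ∈ q.divisors, ∑' n, G (e * n) = ∑' m, {m | e ∣ m}.indicator G m :=
    fun e he => Nat.tsum_comp_mul_left_eq_tsum_indicator (Nat.pos_of_mem_divisors he).ne' G
  rw [sum_congr rfl fun e he => by rw [hsum e he, ← (hG.indicator _).tsum_mul_left],
    ← Summable.tsum_finsetSum fun e _ => (hG.indicator _).mul_left _]
  refine tsum_congr fun m => ?_
  simp_rw [Set.indicator_apply, Set.mem_ofPred_eq, mul_ite, mul_zero, ← sum_filter, ← sum_mul,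
    sum_moebius_filter_dvd hq, ite_mul, one_mul, zero_mul]

lemma one_div_mul_sum_moebius_eq_tsum_ite_coprime {K : Type*} [NormedField K] [CompleteSpace K]
    {q : ℕ} (hq : q ≠ 0) {g : ℕ → K} (hg : Summable fun n : ℕ => g n / n) :
    1 / (q : K) * ∑ e ∈ q.divisors, (moebius e : K) / e * ∑' n : ℕ, g (e * n) / n =
      ∑' m : ℕ, (if m.Coprime q then g m / m else 0) / q := by
  rw [tsum_div_const, tsum_ite_coprime_eq_sum_moebius_mul_tsum hq hg, one_div, inv_mul_eq_div]
  congr 1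
  refine sum_congr rfl fun e _ => ?_
  simp_rw [Nat.cast_mul, div_mul_eq_div_div_swap, tsum_div_const]
  ring

theorem mean_value_arithmetic_progression_general (f g : ℕ → ℂ)
    (hf : ∀ n : ℕ, 1 ≤ n → f n = ∑ d ∈ n.divisors, g d)
    (hg : Summable (fun n : ℕ => ‖g n‖ / n))
    (a q : ℕ) (haq : a < q) (hcop : Nat.Coprime a q) :
    Tendsto (fun x : ℝ =>
        (∑ n ∈ (Finset.Icc 1 ⌊x⌋₊).filter (fun n => n % q = a), f n) / x) atTop
      (nhds ((1 / (q : ℂ)) * ∑ d ∈ q.divisors,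
        ((ArithmeticFunction.moebius d : ℂ) / d) * ∑' n : ℕ, g (d * n) / n)) := by
  set density : ℝ → ℕ → ℝ := fun x d => (#{n ∈ Icc 1 ⌊x⌋₊ | n % q = a ∧ d ∣ n} : ℝ) / x
  have hsum (x : ℝ) : (∑ n ∈ (Icc 1 ⌊x⌋₊).filter (fun n => n % q = a), f n) / x =
      ∑' d, (density x d : ℂ) * g d := by
    rw [sum_congr rfl fun n hn => hf n (mem_Icc.mp (mem_filter.mp hn).1).1,
      sum_filter_sum_divisors_eq_tsum_card_smul, ← tsum_div_const]
    refine tsum_congr fun d => ?_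
    simp only [density, nsmul_eq_mul]
    push_cast
    ring
  have hvalue : ∑' m : ℕ, (if m.Coprime q then g m / m else 0) / q =
      ∑' d, ((if d.Coprime q then 1 / (d * q) else 0 : ℝ) : ℂ) * g d :=
    tsum_congr fun d => by split_ifs <;> push_cast <;> ring
  have hbound : ∀ᶠ x in atTop, ∀ d, ‖(density x d : ℂ) * g d‖ ≤ ‖g d‖ / d := by
    filter_upwards [eventually_gt_atTop 0] with x hx d
    rw [norm_mul, Complex.norm_real, Real.norm_of_nonneg (by positivity), div_eq_inv_mul,
      ← one_div]
    exact mul_le_mul_of_nonneg_right (card_Icc_filter_and_dvd_div_le _ hx d) (norm_nonneg _)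
  have hg' : Summable fun n : ℕ => g n / n := .of_norm (by simpa [norm_div] using hg)
  rw [funext hsum, one_div_mul_sum_moebius_eq_tsum_ite_coprime (by omega) hg', hvalue]
  exact tendsto_tsum_of_dominated_convergence hg (fun d =>
    ((Complex.continuous_ofReal.tendsto _).comp
      (tendsto_card_filter_mod_eq_and_dvd_div haq hcop d)).mul_const (g d)) hbound

/-- Theorem 10 (specialized via (41) to gcd(a,q) = 1): if f(n) = ∑_{d ∣ n} g(d)
and ∑_{n ≥ 1} |g(n)|/n converges, then for 1 ≤ a < q with gcd(a,q) = 1 the mean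
value of f along n ≡ a (mod q) is (1/q) ∑_{d ∣ q} (μ(d)/d) ∑_{n ≥ 1} g(dn)/n. -/
theorem mean_value_arithmetic_progression (f g : ℕ → ℂ)
    (hf : ∀ n : ℕ, 1 ≤ n → f n = ∑ d ∈ n.divisors, g d)
    (hg : Summable (fun n : ℕ => ‖g n‖ / n))
    (a q : ℕ) (ha : 1 ≤ a) (haq : a < q) (hcop : Nat.Coprime a q) :
    Tendsto (fun x : ℝ =>
        (∑ n ∈ (Finset.Icc 1 ⌊x⌋₊).filter (fun n => n % q = a), f n) / x) atTop
      (nhds ((1 / (q : ℂ)) * ∑ d ∈ q.divisors,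
        ((ArithmeticFunction.moebius d : ℂ) / d) * ∑' n : ℕ, g (d * n) / n)) :=
  mean_value_arithmetic_progression_general f g hf hg a q haq hcop
end
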